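/- arXiv:2305.09619 — 6 statements merged into one kernel-verified Lean document; each statement's English description precedes it below -/
import Mathlib

section
/- Let f: V → ℝ^{d₂} be a C¹ map on V ⊆ ℝ^{d₁}, let v: [0,1] → V be a C¹ curve, let ‖·‖ be a norm on ℝ^{d₂}, and suppose there are constants c > 0 and p > 1 such that ‖(d/ds) f(v(s))‖ ≤ c·max{‖f(v(s))‖, ‖f(v(0))‖}^p for all s ∈ [0,1]. If α := c(p−1)‖f(v(0))‖^{p−1} < 1, then for all s ∈ [0,1], ‖f(v(s))‖ ≤ (1−α)^{−1/(p−1)} ‖f(v(0))‖. -/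
/-!
The comparison function `y(x) = M (1 - c (p-1) M^{p-1} x)^{-1/(p-1)}` solves `y' = c y^p`,
`y(0) = M`, and stays above `M`. Once `c` and `M` are raised slightly, the norm of
`g = f ∘ v` can never catch up with `y`: at a first contact point `‖g‖ = y ≥ M`, so
`‖g'‖ ≤ c y^p < y'`. Letting the perturbation go to zero gives `‖g x‖ ≤ y(x) ≤ y(1)`, and
`y(1) = (1 - α)^{-1/(p-1)} M`.
-/

open Set Filter Topology

noncomputable section

def blowupRate (c p M : ℝ) : ℝ :=
  c * (p - 1) * M ^ (p - 1)

def blowupSolution (c p M x : ℝ) : ℝ :=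
  M * (1 - blowupRate c p M * x) ^ (-(1 / (p - 1)))

section

variable {c p M x y : ℝ}

theorem blowupRate_nonneg (hc : 0 ≤ c) (hM : 0 ≤ M) (hp : 1 ≤ p) : 0 ≤ blowupRate c p M := by
  have := sub_nonneg.2 hp
  unfold blowupRate
  positivity

@[simp]
theorem blowupSolution_zero : blowupSolution c p M 0 = M := by
  simp [blowupSolution]

theorem hasDerivAt_blowupSolution (hM : 0 < M) (hp : p ≠ 1) (hx : blowupRate c p M * x < 1) :
    HasDerivAt (blowupSolution c p M) (c * blowupSolution c p M x ^ p) x := by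
  set q := -(1 / (p - 1))
  have hbase : 0 < 1 - blowupRate c p M * x := by linarith
  have hp1 : p - 1 ≠ 0 := sub_ne_zero.2 hp
  refine ((((hasDerivAt_id x).const_mul _).const_sub 1).rpow_const (p := q)
    (Or.inl hbase.ne')).const_mul M |>.congr_deriv ?_
  have hqp : q * p = q - 1 := by simp only [q]; field_simp; ring
  rw [blowupSolution, Real.mul_rpow hM.le (Real.rpow_nonneg hbase.le _),
    ← Real.rpow_mul hbase.le, hqp]
  simp only [blowupRate, id, q, Real.rpow_sub_one hM.ne']
  field_simp

theorem blowupSolution_le_blowupSolution (hc : 0 ≤ c) (hM : 0 ≤ M) (hp : 1 ≤ p) (hxy : x ≤ y)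
    (hy : blowupRate c p M * y < 1) :
    blowupSolution c p M x ≤ blowupSolution c p M y := by
  have hrate := blowupRate_nonneg hc hM hp
  refine mul_le_mul_of_nonneg_left (Real.rpow_le_rpow_of_nonpos (by linarith) ?_ ?_) hM
  · gcongr
  · have := sub_nonneg.2 hp
    simp only [neg_nonpos]
    positivity

end

section

variable {E : Type*} [NormedAddCommGroup E] [NormedSpace ℝ E] {g g' : ℝ → E} {c p M T : ℝ}

theorem norm_le_blowupSolution_of_lt {c' M' : ℝ} (hg : ContinuousOn g (Icc 0 T))
    (hg' : ∀ x ∈ Ico 0 T, HasDerivWithinAt g (g' x) (Ici x) x)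
    (hbound : ∀ x ∈ Ico 0 T, ‖g' x‖ ≤ c * max ‖g x‖ M ^ p) (h0 : ‖g 0‖ ≤ M)
    (hc : c < c') (hc' : 0 ≤ c') (hM : M < M') (hp : 1 < p) (hT : blowupRate c' p M' * T < 1) :
    ∀ ⦃x⦄, x ∈ Icc 0 T → ‖g x‖ ≤ blowupSolution c' p M' x := by
  have hM' : 0 < M' := (norm_nonneg _).trans_lt (h0.trans_lt hM)
  have hlt (x) (hx : x ∈ Icc 0 T) : blowupRate c' p M' * x < 1 :=
    (mul_le_mul_of_nonneg_left hx.2 (blowupRate_nonneg hc' hM'.le hp.le)).trans_lt hT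
  have hB (x) (hx : x ∈ Icc 0 T) := hasDerivAt_blowupSolution hM' hp.ne' (hlt x hx)
  refine image_norm_le_of_norm_deriv_right_lt_deriv_boundary' hg hg' ?_
    (fun x hx => (hB x hx).continuousAt.continuousWithinAt)
    (fun x hx => (hB x (Ico_subset_Icc_self hx)).hasDerivWithinAt) ?_
  · simpa using h0.trans hM.le
  · intro x hx hgx
    have hMB : M' ≤ blowupSolution c' p M' x := by
      simpa using blowupSolution_le_blowupSolution hc' hM'.le hp.le hx.1
        (hlt x (Ico_subset_Icc_self hx))
    calc ‖g' x‖ ≤ c * max ‖g x‖ M ^ p := hbound x hx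
      _ = c * blowupSolution c' p M' x ^ p := by rw [hgx, max_eq_left (hM.le.trans hMB)]
      _ < c' * blowupSolution c' p M' x ^ p := by
        gcongr
        exact Real.rpow_pos_of_pos (hM'.trans_le hMB) p

theorem norm_le_blowupSolution' (hg : ContinuousOn g (Icc 0 T))
    (hg' : ∀ x ∈ Ico 0 T, HasDerivWithinAt g (g' x) (Ici x) x)
    (hbound : ∀ x ∈ Ico 0 T, ‖g' x‖ ≤ c * max ‖g x‖ M ^ p) (h0 : ‖g 0‖ ≤ M)
    (hc : 0 ≤ c) (hp : 1 < p) (hT : blowupRate c p M * T < 1) :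
    ∀ ⦃x⦄, x ∈ Icc 0 T → ‖g x‖ ≤ blowupSolution c p M x := by
  intro x hx
  have hM : 0 ≤ M := (norm_nonneg _).trans h0
  have hrate : ContinuousAt (fun ε => blowupRate (c + ε) p (M + ε)) 0 := by
    have := (continuousAt_const.add continuousAt_id).rpow_const (x := (0 : ℝ))
      (f := fun ε => M + ε) (p := p - 1) (Or.inr (sub_pos.2 hp).le)
    unfold blowupRate
    fun_prop
  have hsmall : ∀ᶠ ε in 𝓝 0, blowupRate (c + ε) p (M + ε) * T < 1 :=
    (hrate.mul_const T).eventually_lt continuousAt_const (by simpa using hT)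
  have hsol : ContinuousAt (fun ε => blowupSolution (c + ε) p (M + ε) x) 0 := by
    have hbase : blowupRate c p M * x < 1 :=
      (mul_le_mul_of_nonneg_left hx.2 (blowupRate_nonneg hc hM hp.le)).trans_lt hT
    have := ((hrate.mul_const x).const_sub 1).rpow_const (p := -(1 / (p - 1)))
      (Or.inl (by simpa using (sub_pos.2 hbase).ne'))
    exact (continuousAt_const.add continuousAt_id).mul this
  refine ge_of_tendsto (by simpa using hsol.tendsto.mono_left (nhdsWithin_le_nhds (s := Ioi 0))) ?_
  filter_upwards [nhdsWithin_le_nhds hsmall, self_mem_nhdsWithin] with ε hε (hpos : 0 < ε)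
  exact norm_le_blowupSolution_of_lt hg hg' hbound h0 (by linarith) (by linarith) (by linarith)
    hp hε hx

theorem norm_le_blowupSolution (hg : DifferentiableOn ℝ g (Icc 0 T))
    (hbound : ∀ x ∈ Ico 0 T, ‖derivWithin g (Icc 0 T) x‖ ≤ c * max ‖g x‖ M ^ p)
    (h0 : ‖g 0‖ ≤ M) (hc : 0 ≤ c) (hp : 1 < p) (hT : blowupRate c p M * T < 1) :
    ∀ ⦃x⦄, x ∈ Icc 0 T → ‖g x‖ ≤ blowupSolution c p M x :=
  norm_le_blowupSolution' hg.continuousOn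
    (fun x hx => (hg x (Ico_subset_Icc_self hx)).hasDerivWithinAt.mono_of_mem_nhdsWithin
      (Icc_mem_nhdsGE_of_mem hx))
    hbound h0 hc hp hT

end

end

/-- Self-bounding ODE method (variant of Corollary 3 in Simchowitz–Foster):
if the derivative of `s ↦ f (v s)` is bounded by
`c · max{‖f(v(s))‖, ‖f(v(0))‖}^p` with `p > 1`, and
`α = c (p−1) ‖f(v(0))‖^{p−1} < 1`, then
`‖f(v(s))‖ ≤ (1−α)^{−1/(p−1)} ‖f(v(0))‖` on `[0,1]`. -/
theorem self_bounding_ode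
    {d₁ : ℕ} {F : Type*} [NormedAddCommGroup F] [NormedSpace ℝ F]
    (V : Set (EuclideanSpace ℝ (Fin d₁)))
    (f : EuclideanSpace ℝ (Fin d₁) → F) (v : ℝ → EuclideanSpace ℝ (Fin d₁))
    (hf : ContDiffOn ℝ 1 f V) (hv : ContDiffOn ℝ 1 v (Icc 0 1))
    (hmem : MapsTo v (Icc 0 1) V)
    (c p : ℝ) (hc : 0 < c) (hp : 1 < p)
    (hbound : ∀ s ∈ Icc (0:ℝ) 1,
      ‖derivWithin (fun s => f (v s)) (Icc 0 1) s‖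
        ≤ c * max ‖f (v s)‖ ‖f (v 0)‖ ^ p)
    (α : ℝ) (hα : α = c * (p - 1) * ‖f (v 0)‖ ^ (p - 1)) (hα1 : α < 1) :
    ∀ s ∈ Icc (0:ℝ) 1,
      ‖f (v s)‖ ≤ (1 - α) ^ (-(1 / (p - 1))) * ‖f (v 0)‖ := by
  intro s hs
  have hg : DifferentiableOn ℝ (fun s => f (v s)) (Icc 0 1) :=
    (hf.comp hv hmem).differentiableOn one_ne_zero
  have hrate : blowupRate c p ‖f (v 0)‖ = α := hα.symm
  have hT : blowupRate c p ‖f (v 0)‖ * 1 < 1 := by rwa [hrate, mul_one]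
  calc ‖f (v s)‖ ≤ blowupSolution c p ‖f (v 0)‖ s :=
        norm_le_blowupSolution hg (fun x hx => hbound x (Ico_subset_Icc_self hx)) le_rfl
          hc.le hp hT hs
    _ ≤ blowupSolution c p ‖f (v 0)‖ 1 :=
        blowupSolution_le_blowupSolution hc.le (norm_nonneg _) hp.le hs.2 hT
    _ = (1 - α) ^ (-(1 / (p - 1))) * ‖f (v 0)‖ := by
        rw [blowupSolution, hrate, mul_one, mul_comm]
end

section
/- Let A, B be Hilbert spaces, let T, W: A → B, L: B → B, K: B → A be bounded linear operators, and let I_A be the identity on A. Define σ_min(L) := inf_{b : ‖b‖_B = 1} ‖L b‖_B. If ‖W‖_op ≤ min{1, σ_min(L)} / (4‖K‖_op), then for every a ∈ A, ‖(L∘T + W)[a]‖_B² + ‖(I_A + K∘T)[a]‖_A² ≥ ‖a‖_A² · min{1, σ_min(L)²} / (16·max{1, ‖K‖_op²}). -/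
/-!
Put `c := min 1 σ_min(L)`. If `‖K (T a)‖ ≤ ‖a‖ / 2`, the second term alone gives
`‖a + K (T a)‖ ≥ ‖a‖ / 2`. Otherwise `‖T a‖ > ‖a‖ / (2‖K‖)`, so `L` lifts `T a` to norm at least
`c ‖a‖ / (2‖K‖)` while `W` moves it by at most `c ‖a‖ / (4‖K‖)`, and the first term is at least
`c ‖a‖ / (4‖K‖)`. Either way the larger of the two norms is at least `c ‖a‖ / (4 max 1 ‖K‖)`.
-/

section LowerBound

variable {𝕜 : Type*} [RCLike 𝕜] {B C : Type*}
  [NormedAddCommGroup B] [NormedSpace 𝕜 B] [NormedAddCommGroup C] [NormedSpace 𝕜 C]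

theorem sInf_norm_image_sphere_nonneg (L : B →L[𝕜] C) :
    0 ≤ sInf ((fun b => ‖L b‖) '' {b : B | ‖b‖ = 1}) :=
  Real.sInf_nonneg (by rintro _ ⟨b, _, rfl⟩; exact norm_nonneg _)

theorem sInf_norm_image_sphere_mul_norm_le (L : B →L[𝕜] C) (b : B) :
    sInf ((fun b => ‖L b‖) '' {b : B | ‖b‖ = 1}) * ‖b‖ ≤ ‖L b‖ := by
  rcases eq_or_ne b 0 with rfl | hb
  · simp
  have hb₀ : 0 < ‖b‖ := norm_pos_iff.mpr hb
  have hbdd : BddBelow ((fun b => ‖L b‖) '' {b : B | ‖b‖ = 1}) :=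
    ⟨0, by rintro _ ⟨b, _, rfl⟩; exact norm_nonneg _⟩
  have hle : _ ≤ ‖L ((‖b‖⁻¹ : 𝕜) • b)‖ := csInf_le hbdd ⟨_, norm_smul_inv_norm hb, rfl⟩
  rw [map_smul, norm_smul, norm_inv, RCLike.norm_ofReal, abs_norm] at hle
  rw [mul_comm]
  exact (le_inv_mul_iff₀ hb₀).mp hle

end LowerBound

section Perturbation

variable {𝕜 : Type*} [RCLike 𝕜] {A B C : Type*}
  [NormedAddCommGroup A] [NormedSpace 𝕜 A] [NormedAddCommGroup B] [NormedSpace 𝕜 B]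
  [NormedAddCommGroup C] [NormedSpace 𝕜 C]
  {T : A →L[𝕜] B} {W : A →L[𝕜] C} {L : B →L[𝕜] C} {K : B →L[𝕜] A} {c : ℝ}

theorem div_le_norm_add_of_opNorm_le (hL : ∀ b, c * ‖b‖ ≤ ‖L b‖) (hc : 0 ≤ c)
    (hW : ‖W‖ ≤ c / (4 * ‖K‖)) {a : A} (ha : ‖a‖ / 2 < ‖K (T a)‖) :
    c * ‖a‖ / (4 * ‖K‖) ≤ ‖L (T a) + W a‖ := by
  have hKT : ‖a‖ / 2 < ‖K‖ * ‖T a‖ := ha.trans_le (K.le_opNorm (T a))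
  have hK : 0 < ‖K‖ := norm_pos_iff.mpr fun hK => by simp [hK] at ha; linarith [norm_nonneg a]
  have hTa : c * ‖a‖ / (2 * ‖K‖) ≤ ‖L (T a)‖ := calc
    c * ‖a‖ / (2 * ‖K‖) = c * (‖a‖ / 2 / ‖K‖) := by field_simp
    _ ≤ c * ‖T a‖ := mul_le_mul_of_nonneg_left ((div_le_iff₀' hK).mpr hKT.le) hc
    _ ≤ ‖L (T a)‖ := hL (T a)
  have hWa : ‖W a‖ ≤ c * ‖a‖ / (4 * ‖K‖) := calc
    ‖W a‖ ≤ ‖W‖ * ‖a‖ := W.le_opNorm a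
    _ ≤ c / (4 * ‖K‖) * ‖a‖ := mul_le_mul_of_nonneg_right hW (norm_nonneg a)
    _ = c * ‖a‖ / (4 * ‖K‖) := by ring
  calc c * ‖a‖ / (4 * ‖K‖) = c * ‖a‖ / (2 * ‖K‖) - c * ‖a‖ / (4 * ‖K‖) := by field_simp; ring
    _ ≤ ‖L (T a)‖ - ‖W a‖ := by gcongr
    _ ≤ ‖L (T a) + W a‖ := norm_sub_le_norm_add _ _

theorem div_le_max_norm_of_opNorm_le (hL : ∀ b, c * ‖b‖ ≤ ‖L b‖) (hc₀ : 0 ≤ c) (hc₁ : c ≤ 1)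
    (hW : ‖W‖ ≤ c / (4 * ‖K‖)) (a : A) :
    c * ‖a‖ / (4 * max 1 ‖K‖) ≤ max ‖L (T a) + W a‖ ‖a + K (T a)‖ := by
  rcases le_or_gt ‖K (T a)‖ (‖a‖ / 2) with hsmall | hlarge
  · refine le_max_of_le_right ?_
    calc c * ‖a‖ / (4 * max 1 ‖K‖) ≤ 1 * ‖a‖ / (4 * 1) := by gcongr; exact le_max_left _ _
      _ ≤ ‖a‖ - ‖K (T a)‖ := by linarith [norm_nonneg a]
      _ ≤ ‖a + K (T a)‖ := norm_sub_le_norm_add _ _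
  · refine le_max_of_le_left ((?_ : _ ≤ _).trans (div_le_norm_add_of_opNorm_le hL hc₀ hW hlarge))
    have hK : 0 < ‖K‖ := norm_pos_iff.mpr fun hK => by simp [hK] at hlarge; linarith [norm_nonneg a]
    gcongr
    exact le_max_right _ _

end Perturbation

theorem hilbert_psd_lower_bound_general {A B : Type*}
    [NormedAddCommGroup A] [InnerProductSpace ℝ A]
    [NormedAddCommGroup B] [InnerProductSpace ℝ B]
    (T W : A →L[ℝ] B) (L : B →L[ℝ] B) (K : B →L[ℝ] A)
    (σmin : ℝ) (hσ : σmin = sInf ((fun b => ‖L b‖) '' {b : B | ‖b‖ = 1}))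
    (hW : ‖W‖ ≤ min 1 σmin / (4 * ‖K‖)) :
    ∀ a : A,
      ‖a‖ ^ 2 * min 1 (σmin ^ 2) / (16 * max 1 (‖K‖ ^ 2))
        ≤ ‖(L.comp T + W) a‖ ^ 2
            + ‖(ContinuousLinearMap.id ℝ A + K.comp T) a‖ ^ 2 := by
  intro a
  have hσ₀ : 0 ≤ σmin := hσ ▸ sInf_norm_image_sphere_nonneg L
  have hL : ∀ b, min 1 σmin * ‖b‖ ≤ ‖L b‖ := fun b =>
    (mul_le_mul_of_nonneg_right (min_le_right _ _) (norm_nonneg b)).trans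
      (hσ ▸ sInf_norm_image_sphere_mul_norm_le L b)
  have hmax := div_le_max_norm_of_opNorm_le (T := T) hL (le_min zero_le_one hσ₀)
    (min_le_left _ _) hW a
  have hsq : min 1 (σmin ^ 2) = min 1 σmin ^ 2 := by
    rw [pow_left_monotoneOn.map_min (by simp) hσ₀, one_pow]
  have hsq' : max 1 (‖K‖ ^ 2) = max 1 ‖K‖ ^ 2 := by
    rw [pow_left_monotoneOn.map_max (by simp) (norm_nonneg K), one_pow]
  simp only [add_apply, ContinuousLinearMap.comp_apply, ContinuousLinearMap.id_apply]
  calc ‖a‖ ^ 2 * min 1 (σmin ^ 2) / (16 * max 1 (‖K‖ ^ 2))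
      = (min 1 σmin * ‖a‖ / (4 * max 1 ‖K‖)) ^ 2 := by rw [hsq, hsq']; ring
    _ ≤ max ‖L (T a) + W a‖ ‖a + K (T a)‖ ^ 2 := pow_le_pow_left₀ (by positivity) hmax 2
    _ ≤ ‖L (T a) + W a‖ ^ 2 + ‖a + K (T a)‖ ^ 2 := by
      rcases max_cases ‖L (T a) + W a‖ ‖a + K (T a)‖ with ⟨h, _⟩ | ⟨h, _⟩ <;>
        rw [h] <;> linarith [sq_nonneg ‖L (T a) + W a‖, sq_nonneg ‖a + K (T a)‖]

/-- PSD lower bound in Hilbert spaces: if `‖W‖ ≤ min{1, σ_min(L)}/(4‖K‖)`, then for all `a`,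
`‖(L∘T + W)a‖² + ‖(I + K∘T)a‖² ≥ ‖a‖² · min{1, σ_min(L)²}/(16 max{1, ‖K‖²})`. -/
theorem hilbert_psd_lower_bound {A B : Type*}
    [NormedAddCommGroup A] [InnerProductSpace ℝ A] [CompleteSpace A]
    [NormedAddCommGroup B] [InnerProductSpace ℝ B] [CompleteSpace B]
    (T W : A →L[ℝ] B) (L : B →L[ℝ] B) (K : B →L[ℝ] A)
    (σmin : ℝ) (hσ : σmin = sInf ((fun b => ‖L b‖) '' {b : B | ‖b‖ = 1}))
    (hW : ‖W‖ ≤ min 1 σmin / (4 * ‖K‖)) :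
    ∀ a : A,
      ‖a‖ ^ 2 * min 1 (σmin ^ 2) / (16 * max 1 (‖K‖ ^ 2))
        ≤ ‖(L.comp T + W) a‖ ^ 2
            + ‖(ContinuousLinearMap.id ℝ A + K.comp T) a‖ ^ 2 :=
  hilbert_psd_lower_bound_general T W L K σmin hσ hW
end

section
/- Let X_{1:K} and Y_{1:K} be matrix sequences with Y_k ⪰ 0, let Q ⪰ I, τ > 0, and define Λ_{K+1} = Q, Λ_k = X_kᵀ Λ_{k+1} X_k + τQ + Y_k. Suppose max_k ‖I − X_k‖_op ≤ κτ for some κ with κτ ≤ 1/2. Then for all k ∈ [K+1], λ_min(Λ_k) ≥ min{1/(2κ), 1}. -/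
/-!
We show `Λ_k ⪰ c I` with `c = min (1/(2κ)) 1` by downward induction on `k`. The base case is
`Q ⪰ I ⪰ c I`. For the step, write
`Λ_k - c I = X_kᵀ (Λ_{k+1} - c I) X_k + τ (Q - I) + Y_k + (c X_kᵀ X_k + (τ - c) I)`;
the first three terms are positive semidefinite, and since `‖X_k x‖ ≥ (1 - κτ) ‖x‖` the last one is
at least `(c (1 - κτ)² + τ - c) I = (τ (1 - 2cκ) + c (κτ)²) I ⪰ 0`.
-/

open Matrix

/-- The `ℓ₂ → ℓ₂` operator norm of a real matrix. -/
noncomputable def opNorm {m n : ℕ} (M : Matrix (Fin m) (Fin n) ℝ) : ℝ :=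
  ‖LinearMap.toContinuousLinearMap (Matrix.toEuclideanLin M)‖

namespace Matrix

variable {ι : Type*} [DecidableEq ι]

theorem PosSemidef.sub_smul_one_of_le {A : Matrix ι ι ℝ} {a b : ℝ}
    (hA : (A - a • (1 : Matrix ι ι ℝ)).PosSemidef) (hba : b ≤ a) :
    (A - b • (1 : Matrix ι ι ℝ)).PosSemidef := by
  have hsplit : A - b • (1 : Matrix ι ι ℝ) = (A - a • 1) + (a - b) • 1 := by
    rw [sub_smul]; abel
  rw [hsplit]
  exact hA.add (PosSemidef.one.smul (sub_nonneg.mpr hba))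

variable [Fintype ι]

theorem posSemidef_transpose_mul_self_sub_smul_one {X : Matrix ι ι ℝ} {s : ℝ}
    (h : ∀ x : EuclideanSpace ℝ ι, s * ‖x‖ ^ 2 ≤ ‖X.toEuclideanLin x‖ ^ 2) :
    (Xᵀ * X - s • (1 : Matrix ι ι ℝ)).PosSemidef := by
  rw [← conjTranspose_eq_transpose_of_trivial, ← isPositive_toEuclideanLin_iff]
  refine ⟨isSymmetric_toEuclideanLin_iff.mpr
    ((isHermitian_conjTranspose_mul_self X).sub (isHermitian_one.smul (IsSelfAdjoint.all s))),
    fun x => ?_⟩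
  rw [map_sub, map_smul, toLpLin_mul_same, toLpLin_one, toEuclideanLin_conjTranspose_eq_adjoint]
  simpa [inner_sub_left, inner_smul_left, LinearMap.adjoint_inner_left] using h x

theorem PosSemidef.lyapunov_step {A X Q Y : Matrix ι ι ℝ} {c τ : ℝ}
    (hA : (A - c • (1 : Matrix ι ι ℝ)).PosSemidef) (hQ : (Q - 1).PosSemidef) (hτ : 0 ≤ τ)
    (hY : Y.PosSemidef) (hX : (c • (Xᵀ * X) + (τ - c) • (1 : Matrix ι ι ℝ)).PosSemidef) :
    (Xᵀ * A * X + τ • Q + Y - c • (1 : Matrix ι ι ℝ)).PosSemidef := by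
  have hsplit : Xᵀ * A * X + τ • Q + Y - c • (1 : Matrix ι ι ℝ) =
      Xᵀ * (A - c • 1) * X + τ • (Q - 1) + Y + (c • (Xᵀ * X) + (τ - c) • 1) := by
    simp only [Matrix.mul_sub, Matrix.sub_mul, Matrix.mul_smul, Matrix.smul_mul, mul_one,
      smul_sub, sub_smul]
    abel
  rw [hsplit]
  have hconj := hA.conjTranspose_mul_mul_same X
  rw [conjTranspose_eq_transpose_of_trivial] at hconj
  exact ((hconj.add (hQ.smul hτ)).add hY).add hX

end Matrix

lemma norm_toEuclideanLin_le_opNorm_mul {m n : ℕ} (M : Matrix (Fin m) (Fin n) ℝ)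
    (x : EuclideanSpace ℝ (Fin n)) : ‖M.toEuclideanLin x‖ ≤ opNorm M * ‖x‖ :=
  (LinearMap.toContinuousLinearMap M.toEuclideanLin).le_opNorm x

section NearIdentity

variable {n : ℕ} {X : Matrix (Fin n) (Fin n) ℝ} {ε : ℝ}

lemma one_sub_mul_norm_le_norm_toEuclideanLin (hX : opNorm (1 - X) ≤ ε)
    (x : EuclideanSpace ℝ (Fin n)) : (1 - ε) * ‖x‖ ≤ ‖X.toEuclideanLin x‖ := by
  have hdefect : ‖(1 - X).toEuclideanLin x‖ ≤ ε * ‖x‖ :=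
    (norm_toEuclideanLin_le_opNorm_mul _ x).trans (by gcongr)
  have hsplit : x = (1 - X).toEuclideanLin x + X.toEuclideanLin x := by simp
  have htri := norm_add_le ((1 - X).toEuclideanLin x) (X.toEuclideanLin x)
  rw [← hsplit] at htri
  linarith

lemma posSemidef_transpose_mul_self_sub_of_opNorm_one_sub_le (hX : opNorm (1 - X) ≤ ε)
    (hε : ε ≤ 1) : (Xᵀ * X - (1 - ε) ^ 2 • (1 : Matrix (Fin n) (Fin n) ℝ)).PosSemidef := by
  refine posSemidef_transpose_mul_self_sub_smul_one fun x => ?_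
  rw [← mul_pow]
  exact pow_le_pow_left₀ (by positivity) (one_sub_mul_norm_le_norm_toEuclideanLin hX x) 2

lemma posSemidef_smul_transpose_mul_self_add {c τ κ : ℝ} (hc : 0 ≤ c) (hcκ : 2 * c * κ ≤ 1)
    (hτ : 0 ≤ τ) (hκτ : κ * τ ≤ 1) (hX : opNorm (1 - X) ≤ κ * τ) :
    (c • (Xᵀ * X) + (τ - c) • (1 : Matrix (Fin n) (Fin n) ℝ)).PosSemidef := by
  have hsplit : c • (Xᵀ * X) + (τ - c) • (1 : Matrix (Fin n) (Fin n) ℝ) =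
      c • (Xᵀ * X - (1 - κ * τ) ^ 2 • 1) + (τ * (1 - 2 * c * κ) + c * (κ * τ) ^ 2) • 1 := by
    module
  rw [hsplit]
  exact ((posSemidef_transpose_mul_self_sub_of_opNorm_one_sub_le hX hκτ).smul hc).add
    (PosSemidef.one.smul (by nlinarith))

end NearIdentity

/-- Lower bound on a discrete Lyapunov recursion: with `Λ_{K+1} = Q ⪰ I`,
`Λ_k = X_kᵀ Λ_{k+1} X_k + τQ + Y_k`, `Y_k ⪰ 0`, and `max_k ‖I − X_k‖_op ≤ κτ ≤ 1/2`,
one has `λ_min(Λ_k) ≥ min{1/(2κ), 1}` for all `k ∈ [K+1]`. -/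
theorem lyapunov_recursion_eigenvalue_lower_bound {n K : ℕ}
    (τ κ : ℝ) (hτ : 0 < τ) (hκ : 0 < κ) (hκτ : κ * τ ≤ 1 / 2)
    (X Y Λ : ℕ → Matrix (Fin n) (Fin n) ℝ) (Q : Matrix (Fin n) (Fin n) ℝ)
    (hQ : (Q - 1).PosSemidef)
    (hY : ∀ k, 1 ≤ k → k ≤ K → (Y k).PosSemidef)
    (hX : ∀ k, 1 ≤ k → k ≤ K → opNorm (1 - X k) ≤ κ * τ)
    (hΛtop : Λ (K + 1) = Q)
    (hrec : ∀ k, 1 ≤ k → k ≤ K →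
      Λ k = (X k)ᵀ * Λ (k + 1) * X k + τ • Q + Y k) :
    ∀ k, 1 ≤ k → k ≤ K + 1 →
      (Λ k - min (1 / (2 * κ)) 1 • (1 : Matrix (Fin n) (Fin n) ℝ)).PosSemidef := by
  set c := min (1 / (2 * κ)) 1
  have hc : 0 ≤ c := le_min (by positivity) zero_le_one
  have hcκ : 2 * c * κ ≤ 1 := calc
    2 * c * κ ≤ 2 * (1 / (2 * κ)) * κ := by gcongr; exact min_le_left _ _
    _ = 1 := by field_simp
  intro k hk1 hkK
  induction hkK using Nat.decreasingInduction with
  | self =>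
    rw [hΛtop]
    exact PosSemidef.sub_smul_one_of_le (by rwa [one_smul]) (min_le_right _ _)
  | of_succ k hkK ih =>
    rw [hrec k hk1 (by omega)]
    exact (ih (by omega)).lyapunov_step hQ hτ.le (hY k hk1 (by omega))
      (posSemidef_smul_transpose_mul_self_add hc hcκ hτ.le (by linarith) (hX k hk1 (by omega)))
end

section
/- Let X_{1:K} be square matrices, Q ⪰ I, τ > 0, and define the Lyapunov recursion Λ_{K+1} = Q, Λ_k = X_kᵀ Λ_{k+1} X_k + τ(Q + Y_k) with Y_k ⪰ 0. Define Φ_{j,k} := X_{j−1}·X_{j−2}⋯X_k (with Φ_{k,k} = I). Suppose max_k ‖I − X_k‖_op ≤ κτ with κτ ≤ 1/2, and set M := max_{k} ‖Λ_k‖_op and γ := 1/M. Then for all 1 ≤ k ≤ j ≤ K+1, ‖Φ_{j,k}‖_op² ≤ max{1, 2κ}·M·(1 − τγ)^{j−k}. -/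
/-!
The quadratic forms `v ↦ vᵀ Λ_j v` are Lyapunov functions for the products `Φ_{j,k}`.
From `Λ_m = X_mᵀ Λ_{m+1} X_m + τ(Q + Y_m)` and `Q + Y_m ⪰ I ⪰ Λ_m / M`, one step costs the
factor `1 - τγ`: `(X_m w)ᵀ Λ_{m+1} (X_m w) ≤ (1 - τγ) wᵀ Λ_m w`. Conversely `Λ_j ⪰ I / max{1, 2κ}`
by backward induction: `‖I - X_m‖ ≤ κτ` gives `X_mᵀ X_m ⪰ (1 - 2κτ) I`, and the loss `2κτ` is paid
for by `τ(Q + Y_m) ⪰ τ I`. Hence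
`|Φ_{j,k} v|² ≤ max{1, 2κ} (Φ_{j,k} v)ᵀ Λ_j (Φ_{j,k} v) ≤ max{1, 2κ} (1 - τγ)^{j-k} M |v|²`.
-/

open Matrix

open WithLp

section OperatorNorm

variable {m n : ℕ}

lemma dotProduct_self_nonneg (v : Fin n → ℝ) : 0 ≤ v ⬝ᵥ v := by
  simpa using dotProduct_self_star_nonneg v

lemma norm_toLp_sq (v : Fin n → ℝ) : ‖toLp 2 v‖ ^ 2 = v ⬝ᵥ v := by
  rw [← real_inner_self_eq_norm_sq, EuclideanSpace.inner_toLp_toLp, star_trivial]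

lemma norm_toLp_mulVec_le (A : Matrix (Fin m) (Fin n) ℝ) (v : Fin n → ℝ) :
    ‖toLp 2 (A *ᵥ v)‖ ≤ opNorm A * ‖toLp 2 v‖ :=
  (LinearMap.toContinuousLinearMap (toEuclideanLin A)).le_opNorm (toLp 2 v)

lemma opNorm_nonneg (A : Matrix (Fin m) (Fin n) ℝ) : 0 ≤ opNorm A := norm_nonneg _

lemma le_of_forall_mul_dotProduct_self_le {ι : Type*} [Fintype ι] [Nonempty ι] {a b : ℝ}
    (h : ∀ v : ι → ℝ, a * (v ⬝ᵥ v) ≤ b * (v ⬝ᵥ v)) : a ≤ b := by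
  have h1 := h 1
  simp only [dotProduct_one, Pi.one_apply, Finset.sum_const, Finset.card_univ, nsmul_eq_mul,
    mul_one] at h1
  exact le_of_mul_le_mul_right h1 (by simp [Fintype.card_pos])

lemma opNorm_sq_le_of_forall_dotProduct_le [NeZero n] {A : Matrix (Fin m) (Fin n) ℝ} {c : ℝ}
    (h : ∀ v, (A *ᵥ v) ⬝ᵥ (A *ᵥ v) ≤ c * (v ⬝ᵥ v)) : opNorm A ^ 2 ≤ c := by
  have hc : 0 ≤ c := le_of_forall_mul_dotProduct_self_le fun v =>
    (zero_mul (v ⬝ᵥ v)).trans_le ((dotProduct_self_nonneg (A *ᵥ v)).trans (h v))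
  suffices opNorm A ≤ √c by simpa [hc] using pow_le_pow_left₀ (opNorm_nonneg A) this 2
  refine ContinuousLinearMap.opNorm_le_bound _ (Real.sqrt_nonneg c) fun x => ?_
  refine (pow_le_pow_iff_left₀ (norm_nonneg _) (by positivity) two_ne_zero).mp ?_
  obtain ⟨v, rfl⟩ : ∃ v, x = toLp 2 v := ⟨ofLp x, rfl⟩
  change ‖toLp 2 (A *ᵥ v)‖ ^ 2 ≤ (√c * ‖toLp 2 v‖) ^ 2
  rw [mul_pow, Real.sq_sqrt hc, norm_toLp_sq, norm_toLp_sq]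
  exact h v

lemma dotProduct_mulVec_le_opNorm_mul (A : Matrix (Fin n) (Fin n) ℝ) (v : Fin n → ℝ) :
    v ⬝ᵥ (A *ᵥ v) ≤ opNorm A * (v ⬝ᵥ v) := by
  calc v ⬝ᵥ (A *ᵥ v) = inner ℝ (toLp 2 (A *ᵥ v)) (toLp 2 v) := by
        rw [EuclideanSpace.inner_toLp_toLp, star_trivial]
    _ ≤ ‖toLp 2 (A *ᵥ v)‖ * ‖toLp 2 v‖ := real_inner_le_norm _ _
    _ ≤ opNorm A * ‖toLp 2 v‖ * ‖toLp 2 v‖ := by gcongr; exact norm_toLp_mulVec_le A v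
    _ = opNorm A * (v ⬝ᵥ v) := by rw [mul_assoc, ← sq, norm_toLp_sq]

lemma one_sub_two_mul_dotProduct_self_le {X : Matrix (Fin n) (Fin n) ℝ} {b : ℝ}
    (hX : opNorm (1 - X) ≤ b) (v : Fin n → ℝ) :
    (1 - 2 * b) * (v ⬝ᵥ v) ≤ (X *ᵥ v) ⬝ᵥ (X *ᵥ v) := by
  set E := 1 - X
  have hXv : X *ᵥ v = v - E *ᵥ v := by simp [E, sub_mulVec]
  have hEv : v ⬝ᵥ (E *ᵥ v) ≤ b * (v ⬝ᵥ v) :=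
    (dotProduct_mulVec_le_opNorm_mul E v).trans
      (mul_le_mul_of_nonneg_right hX (dotProduct_self_nonneg v))
  have hEE := dotProduct_self_nonneg (E *ᵥ v)
  rw [hXv, sub_dotProduct, dotProduct_sub, dotProduct_sub, dotProduct_comm (E *ᵥ v) v]
  linarith

lemma opNorm_fin_zero (A : Matrix (Fin m) (Fin 0) ℝ) : opNorm A = 0 := by
  rw [Subsingleton.elim A 0]
  simp [opNorm]

end OperatorNorm

section Lyapunov

variable {n : ℕ} {τ : ℝ} {X Λ Q Y : Matrix (Fin n) (Fin n) ℝ}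

lemma dotProduct_self_le_dotProduct_mulVec_add (hQ : (Q - 1).PosSemidef) (hY : Y.PosSemidef)
    (v : Fin n → ℝ) : v ⬝ᵥ v ≤ v ⬝ᵥ ((Q + Y) *ᵥ v) := by
  have h := (hQ.add hY).dotProduct_mulVec_nonneg v
  simp only [star_trivial, add_mulVec, sub_mulVec, one_mulVec, dotProduct_add,
    dotProduct_sub] at h ⊢
  linarith

lemma add_le_dotProduct_mulVec_lyapunov (hτ : 0 ≤ τ) (hQ : (Q - 1).PosSemidef)
    (hY : Y.PosSemidef) (v : Fin n → ℝ) :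
    (X *ᵥ v) ⬝ᵥ (Λ *ᵥ (X *ᵥ v)) + τ * (v ⬝ᵥ v) ≤ v ⬝ᵥ ((Xᵀ * Λ * X + τ • (Q + Y)) *ᵥ v) := by
  rw [add_mulVec, dotProduct_add, ← mulVec_mulVec, ← mulVec_mulVec, dotProduct_mulVec v Xᵀ,
    vecMul_transpose, smul_mulVec, dotProduct_smul, smul_eq_mul]
  gcongr
  exact dotProduct_self_le_dotProduct_mulVec_add hQ hY v

lemma lyapunov_step_contraction (hτ : 0 ≤ τ) (hQ : (Q - 1).PosSemidef) (hY : Y.PosSemidef)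
    {M : ℝ} (hM : 0 ≤ M) {w : Fin n → ℝ}
    (hw : w ⬝ᵥ ((Xᵀ * Λ * X + τ • (Q + Y)) *ᵥ w) ≤ M * (w ⬝ᵥ w)) :
    (X *ᵥ w) ⬝ᵥ (Λ *ᵥ (X *ᵥ w)) ≤ (1 - τ / M) * (w ⬝ᵥ ((Xᵀ * Λ * X + τ • (Q + Y)) *ᵥ w)) := by
  have hstep := add_le_dotProduct_mulVec_lyapunov (X := X) (Λ := Λ) hτ hQ hY w
  have hww := dotProduct_self_nonneg w
  have hS : τ / M * (w ⬝ᵥ ((Xᵀ * Λ * X + τ • (Q + Y)) *ᵥ w)) ≤ τ * (w ⬝ᵥ w) :=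
    calc _ ≤ τ / M * (M * (w ⬝ᵥ w)) := by gcongr
      _ = τ * (M / M) * (w ⬝ᵥ w) := by ring
      _ ≤ τ * 1 * (w ⬝ᵥ w) := by gcongr; exact div_self_le_one M
      _ = τ * (w ⬝ᵥ w) := by rw [mul_one]
  linarith

end Lyapunov

lemma dotProduct_mulVec_transition_le_pow {n k j : ℕ} {X Λ : ℕ → Matrix (Fin n) (Fin n) ℝ}
    {Φ : ℕ → Matrix (Fin n) (Fin n) ℝ} {ρ : ℝ} (hρ : 0 ≤ ρ) (hΦk : Φ k = 1)
    (hΦ : ∀ m, k ≤ m → Φ (m + 1) = X m * Φ m)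
    (hstep : ∀ m, k ≤ m → m < j → ∀ w,
      (X m *ᵥ w) ⬝ᵥ (Λ (m + 1) *ᵥ (X m *ᵥ w)) ≤ ρ * (w ⬝ᵥ (Λ m *ᵥ w)))
    (hkj : k ≤ j) (v : Fin n → ℝ) :
    (Φ j *ᵥ v) ⬝ᵥ (Λ j *ᵥ (Φ j *ᵥ v)) ≤ ρ ^ (j - k) * (v ⬝ᵥ (Λ k *ᵥ v)) := by
  induction j, hkj using Nat.le_induction with
  | base => simp [hΦk]
  | succ m hkm ih =>
    rw [hΦ m hkm, ← mulVec_mulVec, Nat.sub_add_comm hkm, pow_succ', mul_assoc]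
    exact (hstep m hkm m.lt_succ_self _).trans
      (mul_le_mul_of_nonneg_left (ih fun i hki hij => hstep i hki (hij.trans m.lt_succ_self)) hρ)

section Recursion

variable {n K : ℕ} {τ κ : ℝ} {X Y Λ : ℕ → Matrix (Fin n) (Fin n) ℝ} {Q : Matrix (Fin n) (Fin n) ℝ}

lemma lyapunov_dotProduct_self_le {L : ℝ} (hL1 : 1 ≤ L) (hκL : 2 * κ ≤ L) (hτ : 0 ≤ τ)
    (hQ : (Q - 1).PosSemidef) (hY : ∀ k, 1 ≤ k → k ≤ K → (Y k).PosSemidef)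
    (hX : ∀ k, 1 ≤ k → k ≤ K → opNorm (1 - X k) ≤ κ * τ) (hΛtop : Λ (K + 1) = Q)
    (hrec : ∀ k, 1 ≤ k → k ≤ K → Λ k = (X k)ᵀ * Λ (k + 1) * X k + τ • (Q + Y k))
    {j : ℕ} (hj : 1 ≤ j) (hjK : j ≤ K + 1) (v : Fin n → ℝ) :
    v ⬝ᵥ v ≤ L * (v ⬝ᵥ (Λ j *ᵥ v)) := by
  induction hjK using Nat.decreasingInduction generalizing v with
  | self =>
    have hQv := dotProduct_self_le_dotProduct_mulVec_add hQ PosSemidef.zero v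
    have hvv : 0 ≤ v ⬝ᵥ v := dotProduct_self_nonneg v
    rw [add_zero] at hQv
    rw [hΛtop]
    nlinarith
  | of_succ k hk ih =>
    have hXv := one_sub_two_mul_dotProduct_self_le (hX k hj (by omega)) v
    have hΛv := add_le_dotProduct_mulVec_lyapunov (X := X k) (Λ := Λ (k + 1)) hτ hQ
      (hY k hj (by omega)) v
    have hvv : 0 ≤ v ⬝ᵥ v := dotProduct_self_nonneg v
    rw [← hrec k hj (by omega)] at hΛv
    have hXΛ := ih (by omega) (X k *ᵥ v)
    have hslack : 0 ≤ (L - 2 * κ) * τ * (v ⬝ᵥ v) := by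
      have : 0 ≤ L - 2 * κ := by linarith
      positivity
    nlinarith [mul_le_mul_of_nonneg_left hΛv (by linarith : 0 ≤ L)]

lemma tau_mul_dotProduct_self_le_lyapunov (hτ : 0 ≤ τ) (hQ : (Q - 1).PosSemidef)
    (hY : ∀ k, 1 ≤ k → k ≤ K → (Y k).PosSemidef)
    (hX : ∀ k, 1 ≤ k → k ≤ K → opNorm (1 - X k) ≤ κ * τ) (hΛtop : Λ (K + 1) = Q)
    (hrec : ∀ k, 1 ≤ k → k ≤ K → Λ k = (X k)ᵀ * Λ (k + 1) * X k + τ • (Q + Y k))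
    {k : ℕ} (hk : 1 ≤ k) (hkK : k ≤ K) (v : Fin n → ℝ) :
    τ * (v ⬝ᵥ v) ≤ v ⬝ᵥ (Λ k *ᵥ v) := by
  have hXv := lyapunov_dotProduct_self_le (le_max_left 1 (2 * κ)) (le_max_right 1 (2 * κ)) hτ hQ
    hY hX hΛtop hrec (j := k + 1) (by omega) (by omega) (X k *ᵥ v)
  have hΛ_nonneg := nonneg_of_mul_nonneg_right ((dotProduct_self_nonneg _).trans hXv)
    (by positivity)
  have := add_le_dotProduct_mulVec_lyapunov (X := X k) (Λ := Λ (k + 1)) hτ hQ (hY k hk hkK) v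
  rw [hrec k hk hkK]
  linarith

lemma lyapunov_transition_decay [NeZero n] (hτ : 0 < τ) (hQ : (Q - 1).PosSemidef)
    (hY : ∀ k, 1 ≤ k → k ≤ K → (Y k).PosSemidef)
    (hX : ∀ k, 1 ≤ k → k ≤ K → opNorm (1 - X k) ≤ κ * τ) (hΛtop : Λ (K + 1) = Q)
    (hrec : ∀ k, 1 ≤ k → k ≤ K → Λ k = (X k)ᵀ * Λ (k + 1) * X k + τ • (Q + Y k))
    {M : ℝ} (hM : ∀ m, 1 ≤ m → m ≤ K + 1 → ∀ v, v ⬝ᵥ (Λ m *ᵥ v) ≤ M * (v ⬝ᵥ v))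
    {Φ : ℕ → Matrix (Fin n) (Fin n) ℝ} {k j : ℕ} (hΦk : Φ k = 1)
    (hΦ : ∀ m, k ≤ m → Φ (m + 1) = X m * Φ m)
    (hk : 1 ≤ k) (hkj : k ≤ j) (hjK : j ≤ K + 1) (v : Fin n → ℝ) :
    (Φ j *ᵥ v) ⬝ᵥ (Λ j *ᵥ (Φ j *ᵥ v)) ≤ (1 - τ / M) ^ (j - k) * (M * (v ⬝ᵥ v)) := by
  obtain rfl | hkj := hkj.eq_or_lt
  · simpa [hΦk] using hM k hk hjK v
  have hτM : τ ≤ M := le_of_forall_mul_dotProduct_self_le fun v =>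
    (tau_mul_dotProduct_self_le_lyapunov hτ.le hQ hY hX hΛtop hrec hk (by omega) v).trans
      (hM k hk (by omega) v)
  have hM0 : 0 ≤ M := hτ.le.trans hτM
  have hρ : 0 ≤ 1 - τ / M := sub_nonneg.mpr (div_le_one_of_le₀ hτM hM0)
  refine (dotProduct_mulVec_transition_le_pow hρ hΦk hΦ (fun m hkm hmj w => ?_) hkj.le v).trans
    (by gcongr; exact hM k hk (by omega) v)
  have hΛw := hM m (by omega) (by omega) w
  rw [hrec m (by omega) (by omega)] at hΛw ⊢
  exact lyapunov_step_contraction hτ.le hQ (hY m (by omega) (by omega)) hM0 hΛw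

end Recursion

/-- Exponential decay of the products `Φ_{j,k} = X_{j−1}⋯X_k` under the Lyapunov recursion
`Λ_{K+1} = Q ⪰ I`, `Λ_k = X_kᵀ Λ_{k+1} X_k + τ(Q + Y_k)` with `Y_k ⪰ 0` and
`‖I − X_k‖_op ≤ κτ ≤ 1/2`: with `M = max_k ‖Λ_k‖_op` and `γ = 1/M`,
`‖Φ_{j,k}‖_op² ≤ max{1, 2κ} M (1 − τγ)^{j−k}`. -/
theorem lyapunov_transition_operator_decay {n K : ℕ}
    (τ κ γ M : ℝ) (hτ : 0 < τ)
    (X Y Λ : ℕ → Matrix (Fin n) (Fin n) ℝ) (Q : Matrix (Fin n) (Fin n) ℝ)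
    (Φ : ℕ → ℕ → Matrix (Fin n) (Fin n) ℝ)
    (hQ : (Q - 1).PosSemidef)
    (hY : ∀ k, 1 ≤ k → k ≤ K → (Y k).PosSemidef)
    (hX : ∀ k, 1 ≤ k → k ≤ K → opNorm (1 - X k) ≤ κ * τ)
    (hΛtop : Λ (K + 1) = Q)
    (hrec : ∀ k, 1 ≤ k → k ≤ K →
      Λ k = (X k)ᵀ * Λ (k + 1) * X k + τ • (Q + Y k))
    (hΦdiag : ∀ k, Φ k k = 1)
    (hΦrec : ∀ j k, k ≤ j → Φ (j + 1) k = X j * Φ j k)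
    (hM : M = (Finset.Icc 1 (K + 1)).sup'
      (Finset.nonempty_Icc.mpr (by omega)) fun k => opNorm (Λ k))
    (hγ : γ = 1 / M) :
    ∀ k j, 1 ≤ k → k ≤ j → j ≤ K + 1 →
      opNorm (Φ j k) ^ 2 ≤ max 1 (2 * κ) * M * (1 - τ * γ) ^ (j - k) := by
  intro k j hk hkj hjK
  obtain rfl | hn := Nat.eq_zero_or_pos n
  · simp [opNorm_fin_zero, hM]
  have : NeZero n := ⟨hn.ne'⟩
  have hΛM : ∀ m, 1 ≤ m → m ≤ K + 1 → ∀ v, v ⬝ᵥ (Λ m *ᵥ v) ≤ M * (v ⬝ᵥ v) := fun m h1 h2 v =>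
    (dotProduct_mulVec_le_opNorm_mul _ v).trans <| mul_le_mul_of_nonneg_right
      (hM ▸ Finset.le_sup' (fun k => opNorm (Λ k)) (Finset.mem_Icc.mpr ⟨h1, h2⟩))
      (dotProduct_self_nonneg v)
  refine opNorm_sq_le_of_forall_dotProduct_le fun v => ?_
  rw [hγ, mul_one_div]
  calc (Φ j k *ᵥ v) ⬝ᵥ (Φ j k *ᵥ v)
      ≤ max 1 (2 * κ) * ((Φ j k *ᵥ v) ⬝ᵥ (Λ j *ᵥ (Φ j k *ᵥ v))) :=
        lyapunov_dotProduct_self_le (le_max_left 1 (2 * κ)) (le_max_right 1 (2 * κ)) hτ.le hQ hY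
          hX hΛtop hrec (hk.trans hkj) hjK _
    _ ≤ max 1 (2 * κ) * ((1 - τ / M) ^ (j - k) * (M * (v ⬝ᵥ v))) := by
        gcongr
        exact lyapunov_transition_decay hτ hQ hY hX hΛtop hrec hΛM (Φ := (Φ · k)) (hΦdiag k)
          (fun m hm => hΦrec m k hm) hk hkj hjK v
    _ = max 1 (2 * κ) * M * (1 - τ / M) ^ (j - k) * (v ⬝ᵥ v) := by ring
end

section
/- Let X_{1:K} be square matrices, Q ⪰ I, τ > 0, define Λ_{K+1} = Q and Λ_k = X_kᵀ Λ_{k+1} X_k + τ(Q + τ^{−1}Y_k) with Y_k ⪰ 0, let Φ_{j,k} := X_{j−1}⋯X_k, and let T_{k,j}(·) := Φ_{j,k}ᵀ(·)Φ_{j,k}. Then for any sequence of symmetric matrices Z_k,…,Z_K, ‖∑_{j=k}^{K} T_{k,j}(Z_j)‖_op ≤ (1/τ)·‖Λ_k‖_op · max_{j≥k} ‖Z_j‖_op. -/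
open Matrix

/-!
Let `G_k = ∑_{j=k}^K Φ_{j,k}ᵀ Φ_{j,k}`. Since `G_k = I + X_kᵀ G_{k+1} X_k`, `Q ⪰ I` and `Y_k ⪰ 0`,
downward induction on `k` gives `τ G_k ⪯ Λ_k`. With `c = max_j ‖Z_j‖` we have
`-c I ⪯ Z_j ⪯ c I`, and congruences are monotone, so
`-(c/τ) Λ_k ⪯ -c G_k ⪯ ∑_j T_{k,j}(Z_j) ⪯ c G_k ⪯ (c/τ) Λ_k`.
For a symmetric `S`, `-B ⪯ S ⪯ B` forces `‖S‖ ≤ ‖B‖`, since both are read off the spectrum.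
-/

open Finset

section SelfAdjointNorm

variable {A : Type*} [NormedRing A] [StarRing A] [NormedAlgebra ℝ A] [PartialOrder A]
  [StarOrderedRing A] [NonnegSpectrumClass ℝ A]
  [IsometricContinuousFunctionalCalculus ℝ A IsSelfAdjoint]

lemma IsSelfAdjoint.norm_le_iff_neg_algebraMap_le_and_le_algebraMap {a : A}
    (ha : IsSelfAdjoint a) {c : ℝ} (hc : 0 ≤ c) :
    ‖a‖ ≤ c ↔ -algebraMap ℝ A c ≤ a ∧ a ≤ algebraMap ℝ A c := by
  rw [← map_neg, algebraMap_le_iff_le_spectrum, le_algebraMap_iff_spectrum_le, ← forall₂_and]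
  conv_lhs => rw [← cfc_id ℝ a]
  rw [norm_cfc_le_iff id a hc]
  simp only [id, Real.norm_eq_abs, abs_le]

lemma IsSelfAdjoint.norm_le_norm_of_neg_le_of_le {a b : A} (ha : IsSelfAdjoint a)
    (hba : -b ≤ a) (hab : a ≤ b) : ‖a‖ ≤ ‖b‖ := by
  have hb : IsSelfAdjoint b := by
    simpa using (IsSelfAdjoint.of_nonneg (sub_nonneg.2 hab)).add ha
  obtain ⟨-, hb₂⟩ :=
    (hb.norm_le_iff_neg_algebraMap_le_and_le_algebraMap (norm_nonneg b)).1 le_rfl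
  exact (ha.norm_le_iff_neg_algebraMap_le_and_le_algebraMap (norm_nonneg b)).2
    ⟨(neg_le_neg hb₂).trans hba, hab.trans hb₂⟩

end SelfAdjointNorm

section Transition

variable {M : Type*} [Monoid M] {X : ℕ → M} {Φ : ℕ → ℕ → M}

lemma transition_eq_mul_of_lt (hΦdiag : ∀ k, Φ k k = 1)
    (hΦrec : ∀ j k, k ≤ j → Φ (j + 1) k = X j * Φ j k) {j k : ℕ} (hkj : k < j) :
    Φ j k = Φ j (k + 1) * X k := by
  induction j, hkj using Nat.le_induction with
  | base => rw [hΦrec k k le_rfl, hΦdiag, hΦdiag, mul_one, one_mul]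
  | succ j hkj ih => rw [hΦrec j k (by omega), ih, hΦrec j (k + 1) hkj, mul_assoc]

end Transition

section Gramian

variable {A : Type*} [Ring A] [StarRing A]

def gramian (Φ : ℕ → ℕ → A) (K k : ℕ) : A :=
  ∑ j ∈ Icc k K, star (Φ j k) * Φ j k

lemma gramian_of_lt {Φ : ℕ → ℕ → A} {K k : ℕ} (h : K < k) : gramian Φ K k = 0 := by
  simp [gramian, Icc_eq_empty_of_lt h]

lemma gramian_eq_one_add {X : ℕ → A} {Φ : ℕ → ℕ → A} (hΦdiag : ∀ k, Φ k k = 1)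
    (hΦrec : ∀ j k, k ≤ j → Φ (j + 1) k = X j * Φ j k) {K k : ℕ} (hk : k ≤ K) :
    gramian Φ K k = 1 + star (X k) * gramian Φ K (k + 1) * X k := by
  rw [gramian, Icc_eq_cons_Ioc hk, sum_cons, hΦdiag, star_one, one_mul, gramian,
    ← Icc_add_one_left_eq_Ioc, mul_sum, sum_mul]
  congr 1
  refine sum_congr rfl fun j hj => ?_
  rw [transition_eq_mul_of_lt hΦdiag hΦrec (mem_Icc.1 hj).1, star_mul]
  noncomm_ring

variable [PartialOrder A] [StarOrderedRing A] [Algebra ℝ A]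

lemma smul_gramian_le_of_lyapunov [PosSMulMono ℝ A] {τ : ℝ} (hτ : 0 ≤ τ) {K : ℕ} {Q : A}
    (hQ : 1 ≤ Q) {X Y Λ : ℕ → A} {Φ : ℕ → ℕ → A} (hY : ∀ k, 1 ≤ k → k ≤ K → 0 ≤ Y k)
    (hΛtop : Λ (K + 1) = Q)
    (hrec : ∀ k, 1 ≤ k → k ≤ K → Λ k = star (X k) * Λ (k + 1) * X k + τ • Q + Y k)
    (hΦdiag : ∀ k, Φ k k = 1) (hΦrec : ∀ j k, k ≤ j → Φ (j + 1) k = X j * Φ j k)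
    {k : ℕ} (hk1 : 1 ≤ k) (hk : k ≤ K + 1) : τ • gramian Φ K k ≤ Λ k := by
  induction hk using Nat.decreasingInduction with
  | self =>
    rw [gramian_of_lt (Nat.lt_succ_self K), smul_zero, hΛtop]
    exact zero_le_one.trans hQ
  | of_succ k hlt ih =>
    have hkK : k ≤ K := Nat.lt_succ_iff.1 hlt
    calc τ • gramian Φ K k
        = star (X k) * (τ • gramian Φ K (k + 1)) * X k + τ • 1 := by
          rw [gramian_eq_one_add hΦdiag hΦrec hkK, smul_add, mul_smul_comm, smul_mul_assoc,
            add_comm]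
      _ ≤ star (X k) * Λ (k + 1) * X k + τ • Q :=
          add_le_add (star_left_conjugate_le_conjugate (ih (by omega)) _)
            (smul_le_smul_of_nonneg_left hQ hτ)
      _ ≤ star (X k) * Λ (k + 1) * X k + τ • Q + Y k := le_add_of_nonneg_right (hY k hk1 hkK)
      _ = Λ k := (hrec k hk1 hkK).symm

lemma sum_conj_le_smul_gramian {Φ : ℕ → ℕ → A} {Z : ℕ → A} {K k : ℕ} {c : ℝ}
    (hZ : ∀ j ∈ Icc k K, Z j ≤ algebraMap ℝ A c) :
    ∑ j ∈ Icc k K, star (Φ j k) * Z j * Φ j k ≤ c • gramian Φ K k := by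
  rw [gramian, smul_sum]
  refine sum_le_sum fun j hj => ?_
  calc star (Φ j k) * Z j * Φ j k ≤ star (Φ j k) * algebraMap ℝ A c * Φ j k :=
        star_left_conjugate_le_conjugate (hZ j hj) _
    _ = c • (star (Φ j k) * Φ j k) := by
        rw [Algebra.algebraMap_eq_smul_one, mul_smul_comm, mul_one, smul_mul_assoc]

lemma neg_smul_gramian_le_sum_conj {Φ : ℕ → ℕ → A} {Z : ℕ → A} {K k : ℕ} {c : ℝ}
    (hZ : ∀ j ∈ Icc k K, -algebraMap ℝ A c ≤ Z j) :
    -(c • gramian Φ K k) ≤ ∑ j ∈ Icc k K, star (Φ j k) * Z j * Φ j k := by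
  have := sum_conj_le_smul_gramian (Φ := Φ) (Z := fun j => -Z j) fun j hj => neg_le.1 (hZ j hj)
  simpa only [mul_neg, neg_mul, sum_neg_distrib, neg_le] using this

end Gramian

open scoped Matrix.Norms.L2Operator in
lemma opNorm_eq_norm {m n : ℕ} (M : Matrix (Fin m) (Fin n) ℝ) : opNorm M = ‖M‖ := rfl

open scoped Matrix.Norms.L2Operator MatrixOrder in
/-- Bound on sums of congruences by the Lyapunov solution: with `Λ_{K+1} = Q ⪰ I`,
`Λ_k = X_kᵀ Λ_{k+1} X_k + τ(Q + τ⁻¹ Y_k)`, `Y_k ⪰ 0`, `Φ_{j,k} = X_{j−1}⋯X_k`, and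
`T_{k,j}(Z) = Φ_{j,k}ᵀ Z Φ_{j,k}`, for symmetric `Z_j`,
`‖∑_{j=k}^K T_{k,j}(Z_j)‖_op ≤ τ⁻¹ ‖Λ_k‖_op max_{j ≥ k} ‖Z_j‖_op`. -/
theorem lyapunov_congruence_sum_bound {n K : ℕ}
    (τ : ℝ) (hτ : 0 < τ)
    (X Y Λ : ℕ → Matrix (Fin n) (Fin n) ℝ) (Q : Matrix (Fin n) (Fin n) ℝ)
    (Φ : ℕ → ℕ → Matrix (Fin n) (Fin n) ℝ)
    (hQ : (Q - 1).PosSemidef)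
    (hY : ∀ k, 1 ≤ k → k ≤ K → (Y k).PosSemidef)
    (hΛtop : Λ (K + 1) = Q)
    (hrec : ∀ k, 1 ≤ k → k ≤ K →
      Λ k = (X k)ᵀ * Λ (k + 1) * X k + τ • (Q + τ⁻¹ • Y k))
    (hΦdiag : ∀ k, Φ k k = 1)
    (hΦrec : ∀ j k, k ≤ j → Φ (j + 1) k = X j * Φ j k)
    (Z : ℕ → Matrix (Fin n) (Fin n) ℝ) (hZ : ∀ j, (Z j).IsSymm)
    (k : ℕ) (hk1 : 1 ≤ k) (hkK : k ≤ K) :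
    opNorm (∑ j ∈ Finset.Icc k K, (Φ j k)ᵀ * Z j * Φ j k)
      ≤ (1 / τ) * opNorm (Λ k) *
        (Finset.Icc k K).sup' (Finset.nonempty_Icc.mpr hkK) fun j => opNorm (Z j) := by
  simp only [opNorm_eq_norm]
  set c := (Icc k K).sup' (nonempty_Icc.mpr hkK) fun j => ‖Z j‖
  have hZsa (j : ℕ) : IsSelfAdjoint (Z j) := isHermitian_iff_isSymm.2 (hZ j)
  have hc : 0 ≤ c := (norm_nonneg _).trans (le_sup' (fun j => ‖Z j‖) (left_mem_Icc.2 hkK))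
  have hZc (j : ℕ) (hj : j ∈ Icc k K) :
      -algebraMap ℝ (Matrix (Fin n) (Fin n) ℝ) c ≤ Z j ∧ Z j ≤ algebraMap ℝ _ c :=
    ((hZsa j).norm_le_iff_neg_algebraMap_le_and_le_algebraMap hc).1
      (le_sup' (fun j => ‖Z j‖) hj)
  have hG : τ • gramian Φ K k ≤ Λ k := by
    refine smul_gramian_le_of_lyapunov hτ.le (le_iff.2 hQ)
      (fun k hk1 hkK => nonneg_iff_posSemidef.2 (hY k hk1 hkK)) hΛtop (fun k hk1 hkK => ?_)
      hΦdiag hΦrec hk1 (by omega)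
    rw [hrec k hk1 hkK, smul_add, smul_smul, mul_inv_cancel₀ hτ.ne', one_smul, ← add_assoc,
      star_eq_conjTranspose, conjTranspose_eq_transpose_of_trivial]
  have hcG : c • gramian Φ K k ≤ (c / τ) • Λ k := by
    grw [← hG, smul_smul, div_mul_cancel₀ c hτ.ne']
  simp only [← conjTranspose_eq_transpose_of_trivial, ← star_eq_conjTranspose]
  have hS : IsSelfAdjoint (∑ j ∈ Icc k K, star (Φ j k) * Z j * Φ j k) :=
    isSelfAdjoint_sum _ fun j _ => (hZsa j).conjugate' _
  calc _ ≤ ‖(c / τ) • Λ k‖ := hS.norm_le_norm_of_neg_le_of_le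
        ((neg_le_neg hcG).trans (neg_smul_gramian_le_sum_conj fun j hj => (hZc j hj).1))
        ((sum_conj_le_smul_gramian fun j hj => (hZc j hj).2).trans hcG)
    _ = 1 / τ * ‖Λ k‖ * c := by
      rw [norm_smul, Real.norm_of_nonneg (div_nonneg hc hτ.le)]
      ring
end

section
/- Let C, Ĉ, D, D̂ be matrices with D having full row rank d (so DDᵀ is invertible), and suppose the true relation A = C D† holds, where D† is the Moore–Penrose pseudoinverse. Define Δ := max{‖C − Ĉ‖_op, ‖D − D̂‖_op} and M := max{‖C‖_op, ‖D‖_op}. If Δ ≤ σ_min(D)/2, then the estimate Â := Ĉ D̂† satisfies ‖Â − A‖_op ≤ 6ΔM·σ_min(D)^{−2}. -/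
/-!
Split `Ĉ D̂† - C D† = (Ĉ - C) D̂† + C (D̂† - D†)` and use the exact identity
`D̂† - D† = -D̂† (D̂ - D) D† + (1 - D̂† D̂) (D̂ - D)ᵀ (D Dᵀ)⁻¹`,
in which `1 - D̂† D̂` is an orthogonal projection, hence of norm at most `1`.

The hypothesis `D Dᵀ ⪰ σ² 1` says `‖Dᵀ x‖ ≥ σ ‖x‖`; in this form the bound survives the perturbation
as `‖D̂ᵀ x‖ ≥ (σ - Δ) ‖x‖ ≥ σ/2 ‖x‖`. Such a lower bound `τ` gives `‖(G Gᵀ)⁻¹‖ ≤ τ⁻²` and, since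
`G†ᵀ G† = (G Gᵀ)⁻¹`, `‖G†‖ ≤ τ⁻¹`. The error is therefore at most `2Δ/σ + 3MΔ/σ²`, and
`σ ≤ ‖D‖ ≤ M` absorbs the first term.
-/

open Matrix

/-- The Moore–Penrose pseudoinverse of a full-row-rank matrix. -/
noncomputable def pinv {d p : ℕ} (D : Matrix (Fin d) (Fin p) ℝ) :
    Matrix (Fin p) (Fin d) ℝ :=
  Dᵀ * (D * Dᵀ)⁻¹

open scoped Matrix.Norms.L2Operator RealInnerProductSpace

theorem opNorm_eq_l2_opNorm {m n : ℕ} (A : Matrix (Fin m) (Fin n) ℝ) : opNorm A = ‖A‖ := rfl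

section RCLike

variable {𝕜 m n : Type*} [RCLike 𝕜] [Fintype m] [Fintype n] [DecidableEq n]

theorem norm_toEuclideanLin_le (A : Matrix m n 𝕜) (x : EuclideanSpace 𝕜 n) :
    ‖toEuclideanLin A x‖ ≤ ‖A‖ * ‖x‖ :=
  A.l2_opNorm_mulVec x

theorem l2_opNorm_mul_sub_mul_le {l : Type*} [Fintype l] [DecidableEq m] (A A' : Matrix l m 𝕜)
    (B B' : Matrix m n 𝕜) :
    ‖A' * B' - A * B‖ ≤ ‖A' - A‖ * ‖B'‖ + ‖A‖ * ‖B' - B‖ := by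
  have : A' * B' - A * B = (A' - A) * B' + A * (B' - B) := by
    rw [Matrix.sub_mul, Matrix.mul_sub]; abel
  rw [this]
  exact (norm_add_le _ _).trans (add_le_add (l2_opNorm_mul _ _) (l2_opNorm_mul _ _))

variable {A : Matrix n n 𝕜} {c : ℝ}

theorem isUnit_of_mul_norm_le_norm_toEuclideanLin (hc : 0 < c)
    (h : ∀ x, c * ‖x‖ ≤ ‖toEuclideanLin A x‖) : IsUnit A := by
  refine mulVec_injective_iff_isUnit.mp fun x y hxy => ?_
  have hker := h (WithLp.toLp 2 (x - y))
  rw [toLpLin_toLp, toLin'_apply, mulVec_sub, hxy, sub_self, WithLp.toLp_zero, norm_zero] at hker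
  have : ‖WithLp.toLp 2 (x - y)‖ = 0 :=
    le_antisymm (nonpos_of_mul_nonpos_right hker hc) (norm_nonneg _)
  simpa [sub_eq_zero] using this

theorem l2_opNorm_nonsing_inv_le (hc : 0 < c) (h : ∀ x, c * ‖x‖ ≤ ‖toEuclideanLin A x‖) :
    ‖A⁻¹‖ ≤ c⁻¹ := by
  have hA := (isUnit_iff_isUnit_det A).mp (isUnit_of_mul_norm_le_norm_toEuclideanLin hc h)
  refine ContinuousLinearMap.opNorm_le_bound _ (inv_nonneg.mpr hc.le) fun y => ?_
  have hy : toEuclideanLin A (toEuclideanLin A⁻¹ y) = y := by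
    rw [← LinearMap.comp_apply, ← toLpLin_mul_same, mul_nonsing_inv _ hA, toLpLin_one,
      LinearMap.id_apply]
  rw [le_inv_mul_iff₀ hc]
  simpa [hy] using h (toEuclideanLin A⁻¹ y)

end RCLike

section Real

variable {m n : Type*} [Fintype m] [Fintype n] [DecidableEq m] [DecidableEq n]

theorem l2_opNorm_transpose (A : Matrix m n ℝ) : ‖Aᵀ‖ = ‖A‖ := by
  rw [← conjTranspose_eq_transpose_of_trivial, l2_opNorm_conjTranspose]

theorem sq_norm_toEuclideanLin_transpose (G : Matrix m n ℝ) (x : EuclideanSpace ℝ m) :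
    ‖toEuclideanLin Gᵀ x‖ ^ 2 = ⟪x, toEuclideanLin (G * Gᵀ) x⟫ := by
  rw [toLpLin_mul_same, LinearMap.comp_apply, ← conjTranspose_eq_transpose_of_trivial,
    toEuclideanLin_conjTranspose_eq_adjoint, ← LinearMap.adjoint_inner_left,
    real_inner_self_eq_norm_sq]

variable {G : Matrix m n ℝ} {τ : ℝ}

theorem mul_norm_le_norm_toEuclideanLin_transpose_of_posSemidef
    (hG : (G * Gᵀ - τ ^ 2 • 1).PosSemidef) (hτ : 0 ≤ τ) (x : EuclideanSpace ℝ m) :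
    τ * ‖x‖ ≤ ‖toEuclideanLin Gᵀ x‖ := by
  have h := (isPositive_toEuclideanLin_iff.mpr hG).inner_nonneg_right x
  rw [map_sub, map_smul, toLpLin_one, LinearMap.sub_apply, inner_sub_right,
    ← sq_norm_toEuclideanLin_transpose] at h
  simp only [LinearMap.smul_apply, LinearMap.id_apply, real_inner_smul_right,
    real_inner_self_eq_norm_sq, sub_nonneg] at h
  exact (pow_le_pow_iff_left₀ (by positivity) (norm_nonneg _) two_ne_zero).mp (by linarith)

theorem sub_norm_sub_mul_norm_le_norm_toEuclideanLin_transpose (H : Matrix m n ℝ)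
    (hG : ∀ x, τ * ‖x‖ ≤ ‖toEuclideanLin Gᵀ x‖) (x : EuclideanSpace ℝ m) :
    (τ - ‖G - H‖) * ‖x‖ ≤ ‖toEuclideanLin Hᵀ x‖ := by
  have hdiff : ‖toEuclideanLin Gᵀ x - toEuclideanLin Hᵀ x‖ ≤ ‖G - H‖ * ‖x‖ := by
    rw [← LinearMap.sub_apply, ← map_sub, ← transpose_sub, ← l2_opNorm_transpose]
    exact norm_toEuclideanLin_le _ x
  linarith [hG x, norm_sub_norm_le (toEuclideanLin Gᵀ x) (toEuclideanLin Hᵀ x)]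

theorem le_l2_opNorm_of_mul_norm_le [Nonempty m]
    (hG : ∀ x, τ * ‖x‖ ≤ ‖toEuclideanLin Gᵀ x‖) : τ ≤ ‖G‖ := by
  obtain ⟨x, hx⟩ := exists_ne (0 : EuclideanSpace ℝ m)
  have := (hG x).trans (norm_toEuclideanLin_le Gᵀ x)
  rw [l2_opNorm_transpose] at this
  exact le_of_mul_le_mul_right this (norm_pos_iff.mpr hx)

theorem sq_mul_norm_le_norm_toEuclideanLin_mul_transpose (hτ : 0 ≤ τ)
    (hG : ∀ x, τ * ‖x‖ ≤ ‖toEuclideanLin Gᵀ x‖) (x : EuclideanSpace ℝ m) :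
    τ ^ 2 * ‖x‖ ≤ ‖toEuclideanLin (G * Gᵀ) x‖ := by
  rcases (norm_nonneg x).eq_or_lt with hx | hx
  · rw [← hx, mul_zero]; exact norm_nonneg _
  have h : (τ * ‖x‖) ^ 2 ≤ ‖x‖ * ‖toEuclideanLin (G * Gᵀ) x‖ := calc
    (τ * ‖x‖) ^ 2 ≤ ‖toEuclideanLin Gᵀ x‖ ^ 2 := pow_le_pow_left₀ (by positivity) (hG x) 2
    _ = ⟪x, toEuclideanLin (G * Gᵀ) x⟫ := sq_norm_toEuclideanLin_transpose G x
    _ ≤ ‖x‖ * ‖toEuclideanLin (G * Gᵀ) x‖ := real_inner_le_norm _ _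
  nlinarith

theorem isUnit_mul_transpose_of_mul_norm_le (hτ : 0 < τ)
    (hG : ∀ x, τ * ‖x‖ ≤ ‖toEuclideanLin Gᵀ x‖) : IsUnit (G * Gᵀ) :=
  isUnit_of_mul_norm_le_norm_toEuclideanLin (by positivity)
    (sq_mul_norm_le_norm_toEuclideanLin_mul_transpose hτ.le hG)

theorem l2_opNorm_inv_mul_transpose_le (hτ : 0 < τ)
    (hG : ∀ x, τ * ‖x‖ ≤ ‖toEuclideanLin Gᵀ x‖) : ‖(G * Gᵀ)⁻¹‖ ≤ (τ ^ 2)⁻¹ :=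
  l2_opNorm_nonsing_inv_le (by positivity)
    (sq_mul_norm_le_norm_toEuclideanLin_mul_transpose hτ.le hG)

end Real

section Pinv

variable {d p : ℕ} {G H : Matrix (Fin d) (Fin p) ℝ} {τ : ℝ}

theorem mul_pinv (hG : IsUnit (G * Gᵀ)) : G * pinv G = 1 := by
  rw [pinv, ← Matrix.mul_assoc, mul_nonsing_inv _ ((isUnit_iff_isUnit_det _).mp hG)]

theorem pinv_mul_mul_transpose (hG : IsUnit (G * Gᵀ)) : pinv G * G * Gᵀ = Gᵀ := by
  rw [pinv, Matrix.mul_assoc, Matrix.mul_assoc,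
    nonsing_inv_mul _ ((isUnit_iff_isUnit_det _).mp hG), Matrix.mul_one]

theorem transpose_pinv (G : Matrix (Fin d) (Fin p) ℝ) : (pinv G)ᵀ = (G * Gᵀ)⁻¹ * G := by
  rw [pinv, transpose_mul, transpose_nonsing_inv, transpose_mul, transpose_transpose]

theorem transpose_pinv_mul_pinv (hG : IsUnit (G * Gᵀ)) :
    (pinv G)ᵀ * pinv G = (G * Gᵀ)⁻¹ := by
  rw [transpose_pinv, Matrix.mul_assoc, mul_pinv hG, Matrix.mul_one]

theorem isStarProjection_pinv_mul (hG : IsUnit (G * Gᵀ)) : IsStarProjection (pinv G * G) where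
  isIdempotentElem := by
    rw [IsIdempotentElem, Matrix.mul_assoc, ← Matrix.mul_assoc G, mul_pinv hG, Matrix.one_mul]
  isSelfAdjoint := by
    rw [IsSelfAdjoint, star_eq_conjTranspose, conjTranspose_eq_transpose_of_trivial,
      transpose_mul, transpose_pinv, pinv, Matrix.mul_assoc]

theorem pinv_sub_pinv (hG : IsUnit (G * Gᵀ)) (hH : IsUnit (H * Hᵀ)) :
    pinv H - pinv G =
      -(pinv H * (H - G) * pinv G) + (1 - pinv H * H) * (H - G)ᵀ * (G * Gᵀ)⁻¹ := by
  have hproj : (1 - pinv H * H) * Hᵀ = 0 := by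
    rw [Matrix.sub_mul, Matrix.one_mul, pinv_mul_mul_transpose hH, sub_self]
  rw [transpose_sub, Matrix.mul_sub (1 - pinv H * H), Matrix.sub_mul _ _ (G * Gᵀ)⁻¹, hproj,
    Matrix.zero_mul, Matrix.mul_assoc _ Gᵀ, ← pinv, Matrix.mul_sub (pinv H),
    Matrix.sub_mul _ _ (pinv G), Matrix.mul_assoc _ G, mul_pinv hG, Matrix.mul_one,
    Matrix.sub_mul 1, Matrix.one_mul]
  abel

theorem l2_opNorm_pinv_le (hτ : 0 < τ) (hG : ∀ x, τ * ‖x‖ ≤ ‖toEuclideanLin Gᵀ x‖) :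
    ‖pinv G‖ ≤ τ⁻¹ := by
  rw [mul_self_le_mul_self_iff (norm_nonneg _) (by positivity),
    ← l2_opNorm_conjTranspose_mul_self, conjTranspose_eq_transpose_of_trivial,
    transpose_pinv_mul_pinv (isUnit_mul_transpose_of_mul_norm_le hτ hG), ← mul_inv, ← sq]
  exact l2_opNorm_inv_mul_transpose_le hτ hG

theorem l2_opNorm_pinv_sub_pinv_le (hG : IsUnit (G * Gᵀ)) (hH : IsUnit (H * Hᵀ)) :
    ‖pinv H - pinv G‖ ≤ ‖pinv H‖ * ‖H - G‖ * ‖pinv G‖ + ‖H - G‖ * ‖(G * Gᵀ)⁻¹‖ := by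
  rw [pinv_sub_pinv hG hH]
  refine (norm_add_le _ _).trans (add_le_add ?_ ?_)
  · rw [norm_neg]
    exact (l2_opNorm_mul _ _).trans (by gcongr; exact l2_opNorm_mul _ _)
  · calc ‖(1 - pinv H * H) * (H - G)ᵀ * (G * Gᵀ)⁻¹‖
        ≤ ‖1 - pinv H * H‖ * ‖(H - G)ᵀ‖ * ‖(G * Gᵀ)⁻¹‖ :=
          (l2_opNorm_mul _ _).trans (by gcongr; exact l2_opNorm_mul _ _)
      _ ≤ 1 * ‖H - G‖ * ‖(G * Gᵀ)⁻¹‖ := by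
          rw [l2_opNorm_transpose]
          gcongr
          exact (isStarProjection_pinv_mul hH).one_sub.norm_le
      _ = ‖H - G‖ * ‖(G * Gᵀ)⁻¹‖ := by rw [one_mul]

end Pinv

/-- Least-squares perturbation: if `A = C D†` with `D` of full row rank and smallest singular
value at least `σ > 0` (i.e. `D Dᵀ ⪰ σ² I`), and if
`Δ = max{‖C − Ĉ‖, ‖D − D̂‖} ≤ σ/2`, then `Â = Ĉ D̂†` satisfies
`‖Â − A‖_op ≤ 6 Δ M σ⁻²` where `M = max{‖C‖, ‖D‖}`. -/
theorem pseudoinverse_perturbation {nr d p : ℕ}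
    (C Chat : Matrix (Fin nr) (Fin p) ℝ) (D Dhat : Matrix (Fin d) (Fin p) ℝ)
    (σ Δ M : ℝ) (hσpos : 0 < σ)
    (hσ : (D * Dᵀ - σ ^ 2 • (1 : Matrix (Fin d) (Fin d) ℝ)).PosSemidef)
    (hΔ : Δ = max (opNorm (C - Chat)) (opNorm (D - Dhat)))
    (hM : M = max (opNorm C) (opNorm D))
    (hsmall : Δ ≤ σ / 2) :
    opNorm (Chat * pinv Dhat - C * pinv D) ≤ 6 * Δ * M / σ ^ 2 := by
  simp only [opNorm_eq_l2_opNorm] at hΔ hM ⊢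
  have hΔ0 : 0 ≤ Δ := hΔ ▸ (norm_nonneg _).trans (le_max_left _ _)
  have hM0 : 0 ≤ M := hM ▸ (norm_nonneg _).trans (le_max_left _ _)
  rcases isEmpty_or_nonempty (Fin d) with hd | hd
  · -- `σ ≤ ‖D‖` fails for `d = 0`, but then both pseudoinverses are empty matrices.
    rw [Subsingleton.elim (pinv Dhat) 0, Subsingleton.elim (pinv D) 0, Matrix.mul_zero,
      Matrix.mul_zero, sub_zero, norm_zero]
    positivity
  have hCC : ‖Chat - C‖ ≤ Δ := norm_sub_rev C Chat ▸ hΔ ▸ le_max_left _ _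
  have hDD : ‖Dhat - D‖ ≤ Δ := norm_sub_rev D Dhat ▸ hΔ ▸ le_max_right _ _
  have hD := mul_norm_le_norm_toEuclideanLin_transpose_of_posSemidef hσ hσpos.le
  have hDhat (x : EuclideanSpace ℝ (Fin d)) : σ / 2 * ‖x‖ ≤ ‖toEuclideanLin Dhatᵀ x‖ :=
    le_trans (by gcongr; linarith [norm_sub_rev D Dhat])
      (sub_norm_sub_mul_norm_le_norm_toEuclideanLin_transpose Dhat hD x)
  have hσM : σ ≤ M := (le_l2_opNorm_of_mul_norm_le hD).trans (hM ▸ le_max_right _ _)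
  calc ‖Chat * pinv Dhat - C * pinv D‖
      ≤ ‖Chat - C‖ * ‖pinv Dhat‖ + ‖C‖ * ‖pinv Dhat - pinv D‖ := l2_opNorm_mul_sub_mul_le _ _ _ _
    _ ≤ ‖Chat - C‖ * ‖pinv Dhat‖
        + ‖C‖ * (‖pinv Dhat‖ * ‖Dhat - D‖ * ‖pinv D‖ + ‖Dhat - D‖ * ‖(D * Dᵀ)⁻¹‖) := by
        gcongr
        exact l2_opNorm_pinv_sub_pinv_le (isUnit_mul_transpose_of_mul_norm_le hσpos hD)
          (isUnit_mul_transpose_of_mul_norm_le (half_pos hσpos) hDhat)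
    _ ≤ Δ * (σ / 2)⁻¹ + M * ((σ / 2)⁻¹ * Δ * σ⁻¹ + Δ * (σ ^ 2)⁻¹) := by
        gcongr
        · exact l2_opNorm_pinv_le (half_pos hσpos) hDhat
        · exact hM ▸ le_max_left _ _
        · exact l2_opNorm_pinv_le (half_pos hσpos) hDhat
        · exact l2_opNorm_pinv_le hσpos hD
        · exact l2_opNorm_inv_mul_transpose_le hσpos hD
    _ ≤ 6 * Δ * M / σ ^ 2 := by
        field_simp
        nlinarith [mul_nonneg hΔ0 (sub_nonneg.mpr hσM)]
end
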